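/- arXiv:2510.02983 — 5 statements merged into one kernel-verified Lean document; each statement's English description precedes it below -/
import Mathlib

section
/- Let d ≥ 1, let K be a nonempty closed convex subset of ℝ^d with closedBall(0,1) ⊆ K ⊆ closedBall(0,R) for some R > 1, and let η > 0 and τ ≥ 0. Then ∫_{ℝ^d} exp(−(infDist(y,K) − τ)²/(2η)) dy ≤ vol(K) · [exp(η d²/2 + τ d) · √(2π η d²) + exp(−τ²/(2η))]. -/
/-!
On `K` the integrand is the constant `exp (-τ² / 2η)`. Off `K`, for `0 ≤ a ≤ b` the convex set
`cthickening a K` contains the ball of radius `1 + a`, so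
`cthickening b K = cthickening (b - a) (cthickening a K) ⊆ ((1 + b) / (1 + a)) • cthickening a K`,
and the shell `{a < infDist · K < b}` has volume at most `((1 + b)^d - (1 + a)^d) vol K`.
Thus the law of `infDist · K` on `Kᶜ` is dominated on intervals by `vol K · d (1 + t)^(d-1) dt`
on `t > 0`. The superlevel sets of `t ↦ exp (-(t - τ)² / 2η)` are intervals, so the layer-cake
formula transfers the domination to the integral, and `(1 + t)^(d-1) ≤ exp (d t)` together with
completing the square reduces the remaining one-dimensional integral to a Gaussian one.
-/

open MeasureTheory Metric Set Pointwise Module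

theorem lintegral_ofReal_le_of_measure_Ioo_le {ν ρ : Measure ℝ} {f : ℝ → ℝ} (hf0 : 0 ≤ f)
    (hf : Measurable f) (hlevel : ∀ s > 0, ∃ a b, {t | s < f t} = Ioo a b)
    (hνρ : ∀ a b, ν (Ioo a b) ≤ ρ (Ioo a b)) :
    ∫⁻ t, ENNReal.ofReal (f t) ∂ν ≤ ∫⁻ t, ENNReal.ofReal (f t) ∂ρ := by
  rw [lintegral_eq_lintegral_meas_lt ν (ae_of_all _ hf0) hf.aemeasurable,
    lintegral_eq_lintegral_meas_lt ρ (ae_of_all _ hf0) hf.aemeasurable]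
  refine setLIntegral_mono' measurableSet_Ioi fun s hs => ?_
  obtain ⟨a, b, hab⟩ := hlevel s hs
  simpa only [hab] using hνρ a b

theorem setOf_lt_exp_neg_sq_div {η : ℝ} (hη : 0 < η) (τ : ℝ) {s : ℝ} (hs : 0 < s) :
    {t | s < Real.exp (-(t - τ) ^ 2 / (2 * η))} =
      Ioo (τ - √(-(2 * η * Real.log s))) (τ + √(-(2 * η * Real.log s))) := by
  ext t
  rw [mem_ofPred_eq, ← Real.log_lt_iff_lt_exp hs, lt_div_iff₀ (by positivity), mem_Ioo,
    ← sub_lt_iff_lt_add', sub_lt_comm, ← abs_sub_lt_iff, Real.lt_sqrt (abs_nonneg _), sq_abs]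
  constructor <;> intro h <;> linarith

theorem lintegral_Ioo_natCast_mul_one_add_pow (n : ℕ) {a b : ℝ} (ha : 0 ≤ a) (hab : a ≤ b) :
    ∫⁻ t in Ioo a b, ENNReal.ofReal (n * (1 + t) ^ (n - 1)) =
      ENNReal.ofReal ((1 + b) ^ n - (1 + a) ^ n) := by
  have hderiv : ∀ t, HasDerivAt (fun t : ℝ => (1 + t) ^ n) (n * (1 + t) ^ (n - 1)) t := fun t => by
    simpa using ((hasDerivAt_id t).const_add 1).fun_pow n
  have hcont : Continuous fun t : ℝ => n * (1 + t) ^ (n - 1) := by fun_prop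
  rw [← ofReal_integral_eq_lintegral_ofReal, ← integral_Ioc_eq_integral_Ioo,
    ← intervalIntegral.integral_of_le hab,
    intervalIntegral.integral_eq_sub_of_hasDerivAt (fun t _ => hderiv t)
      (hcont.intervalIntegrable a b)]
  · exact (hcont.integrableOn_Icc).mono_set Ioo_subset_Icc_self
  · filter_upwards [ae_restrict_mem measurableSet_Ioo] with t ht
    have : 0 ≤ 1 + t := by linarith [ht.1]
    positivity

theorem lintegral_exp_neg_sub_sq_div {η : ℝ} (hη : 0 < η) (m : ℝ) :
    ∫⁻ t, ENNReal.ofReal (Real.exp (-(t - m) ^ 2 / (2 * η))) =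
      ENNReal.ofReal √(2 * Real.pi * η) := by
  have hform : ∀ t, -(t - m) ^ 2 / (2 * η) = -(2 * η)⁻¹ * (t - m) ^ 2 := fun t => by ring
  simp_rw [hform]
  rw [← ofReal_integral_eq_lintegral_ofReal
      ((integrable_exp_neg_mul_sq (by positivity)).comp_sub_right m)
      (ae_of_all _ fun t => (Real.exp_pos _).le),
    integral_sub_right_eq_self (fun t => Real.exp (-(2 * η)⁻¹ * t ^ 2)) m, integral_gaussian,
    div_inv_eq_mul]
  ring_nf

theorem one_add_pow_pred_le_exp {t : ℝ} (ht : 0 ≤ t) (n : ℕ) :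
    (1 + t) ^ (n - 1) ≤ Real.exp (n * t) :=
  calc (1 + t) ^ (n - 1) ≤ (1 + t) ^ n := pow_le_pow_right₀ (by linarith) (Nat.sub_le n 1)
    _ ≤ Real.exp t ^ n := by gcongr; linarith [Real.add_one_le_exp t]
    _ = Real.exp (n * t) := (Real.exp_nat_mul t n).symm

theorem setLIntegral_Ioi_natCast_mul_one_add_pow_mul_exp_le (n : ℕ) {η : ℝ} (hη : 0 < η)
    (τ : ℝ) :
    ∫⁻ t in Ioi 0, ENNReal.ofReal (n * (1 + t) ^ (n - 1)) *
        ENNReal.ofReal (Real.exp (-(t - τ) ^ 2 / (2 * η))) ≤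
      ENNReal.ofReal (Real.exp (η * n ^ 2 / 2 + τ * n) * √(2 * Real.pi * η * n ^ 2)) := by
  set c := n * Real.exp (η * n ^ 2 / 2 + τ * n)
  have hpointwise : ∀ t ∈ Ioi (0 : ℝ), ENNReal.ofReal (n * (1 + t) ^ (n - 1)) *
      ENNReal.ofReal (Real.exp (-(t - τ) ^ 2 / (2 * η))) ≤
      ENNReal.ofReal c * ENNReal.ofReal (Real.exp (-(t - (τ + η * n)) ^ 2 / (2 * η))) := by
    intro t (ht : 0 < t)
    have hcomplete_square : Real.exp (n * t) * Real.exp (-(t - τ) ^ 2 / (2 * η)) =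
        Real.exp (η * n ^ 2 / 2 + τ * n) * Real.exp (-(t - (τ + η * n)) ^ 2 / (2 * η)) := by
      rw [← Real.exp_add, ← Real.exp_add]
      congr 1
      field_simp
      ring
    rw [← ENNReal.ofReal_mul (by positivity), ← ENNReal.ofReal_mul (by positivity)]
    refine ENNReal.ofReal_le_ofReal ?_
    calc n * (1 + t) ^ (n - 1) * Real.exp (-(t - τ) ^ 2 / (2 * η))
        ≤ n * Real.exp (n * t) * Real.exp (-(t - τ) ^ 2 / (2 * η)) := by
          gcongr; exact one_add_pow_pred_le_exp ht.le n
      _ = c * Real.exp (-(t - (τ + η * n)) ^ 2 / (2 * η)) := by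
          rw [mul_assoc, hcomplete_square]; ring
  calc _ ≤ ∫⁻ t in Ioi 0,
        ENNReal.ofReal c * ENNReal.ofReal (Real.exp (-(t - (τ + η * n)) ^ 2 / (2 * η))) :=
        setLIntegral_mono' measurableSet_Ioi hpointwise
    _ ≤ ∫⁻ t, ENNReal.ofReal c * ENNReal.ofReal (Real.exp (-(t - (τ + η * n)) ^ 2 / (2 * η))) :=
        setLIntegral_le_lintegral _ _
    _ = ENNReal.ofReal (c * √(2 * Real.pi * η)) := by
        rw [lintegral_const_mul _ (by fun_prop), lintegral_exp_neg_sub_sq_div hη,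
          ← ENNReal.ofReal_mul (by positivity)]
    _ = _ := by
        rw [Real.sqrt_mul (by positivity : (0 : ℝ) ≤ 2 * Real.pi * η) ((n : ℝ) ^ 2),
          Real.sqrt_sq (Nat.cast_nonneg n)]
        congr 1
        ring

theorem Metric.mem_cthickening_iff_infDist_le {X : Type*} [PseudoMetricSpace X] {s : Set X}
    (hs : s.Nonempty) {δ : ℝ} (hδ : 0 ≤ δ) {x : X} : x ∈ cthickening δ s ↔ infDist x s ≤ δ := by
  rw [mem_cthickening_iff, infDist, ENNReal.le_ofReal_iff_toReal_le (infEDist_ne_top hs) hδ]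

section Thickening

variable {E : Type*} [NormedAddCommGroup E] [NormedSpace ℝ E]

theorem IsCompact.cthickening_subset_smul_of_closedBall_subset {C : Set E} (hCc : IsCompact C)
    (hC : Convex ℝ C) {ρ t : ℝ} (hρ : 0 < ρ) (ht : 0 ≤ t) (hball : closedBall 0 ρ ⊆ C) :
    cthickening t C ⊆ (1 + t / ρ) • C := by
  have hball_t : closedBall (0 : E) t ⊆ (t / ρ) • C := by
    calc closedBall (0 : E) t = (t / ρ) • closedBall 0 ρ := by
          rw [smul_closedBall _ _ hρ.le, smul_zero, Real.norm_of_nonneg (by positivity),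
            div_mul_cancel₀ _ hρ.ne']
      _ ⊆ (t / ρ) • C := smul_set_mono hball
  rw [← hCc.add_closedBall_zero ht, hC.add_smul zero_le_one (by positivity), one_smul]
  exact add_subset_add_left hball_t

variable [MeasurableSpace E] [BorelSpace E] [FiniteDimensional ℝ E] (μ : Measure E)
  [μ.IsAddHaarMeasure] {K : Set E}

theorem addHaar_cthickening_le_mul (hKc : IsCompact K) (hK : Convex ℝ K)
    (hK1 : closedBall 0 1 ⊆ K) {a b : ℝ} (ha : 0 ≤ a) (hab : a ≤ b) :
    μ (cthickening b K) ≤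
      ENNReal.ofReal (((1 + b) / (1 + a)) ^ finrank ℝ E) * μ (cthickening a K) := by
  have hball : closedBall (0 : E) (1 + a) ⊆ cthickening a K := by
    rw [add_comm, ← cthickening_closedBall ha zero_le_one]
    exact cthickening_subset_of_subset a hK1
  have hsub : cthickening b K ⊆ ((1 + b) / (1 + a)) • cthickening a K := by
    have h := (hKc.cthickening (r := a)).cthickening_subset_smul_of_closedBall_subset
      (hK.cthickening a) (by linarith) (sub_nonneg.2 hab) hball
    rwa [cthickening_cthickening (sub_nonneg.2 hab) ha, sub_add_cancel,
      show 1 + (b - a) / (1 + a) = (1 + b) / (1 + a) by field_simp; ring] at h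
  calc μ (cthickening b K) ≤ μ (((1 + b) / (1 + a)) • cthickening a K) := measure_mono hsub
    _ = _ := by
      rw [Measure.addHaar_smul, abs_of_nonneg (by apply pow_nonneg; apply div_nonneg <;> linarith)]

theorem addHaar_cthickening_le (hKc : IsCompact K) (hK : Convex ℝ K)
    (hK1 : closedBall 0 1 ⊆ K) {a : ℝ} (ha : 0 ≤ a) :
    μ (cthickening a K) ≤ ENNReal.ofReal ((1 + a) ^ finrank ℝ E) * μ K := by
  simpa [hKc.isClosed.closure_eq] using addHaar_cthickening_le_mul μ hKc hK hK1 le_rfl ha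

theorem addHaar_cthickening_diff_le (hKc : IsCompact K) (hK : Convex ℝ K)
    (hK1 : closedBall 0 1 ⊆ K) {a b : ℝ} (ha : 0 ≤ a) (hab : a ≤ b) :
    μ (cthickening b K \ cthickening a K) ≤
      ENNReal.ofReal ((1 + b) ^ finrank ℝ E - (1 + a) ^ finrank ℝ E) * μ K := by
  set n := finrank ℝ E
  set r := ((1 + b) / (1 + a)) ^ n with hr_def
  have h1a : 0 < 1 + a := by linarith
  have hr : 1 ≤ r := one_le_pow₀ ((one_le_div h1a).2 (by linarith))
  have hfin : μ (cthickening a K) ≠ ⊤ := (hKc.cthickening (r := a)).measure_lt_top.ne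
  calc μ (cthickening b K \ cthickening a K)
      = μ (cthickening b K) - μ (cthickening a K) :=
        measure_sdiff (cthickening_mono hab K) isClosed_cthickening.nullMeasurableSet hfin
    _ ≤ ENNReal.ofReal r * μ (cthickening a K) - 1 * μ (cthickening a K) := by
        rw [one_mul]
        exact tsub_le_tsub_right (addHaar_cthickening_le_mul μ hKc hK hK1 ha hab) _
    _ = ENNReal.ofReal (r - 1) * μ (cthickening a K) := by
        rw [← ENNReal.sub_mul fun _ _ => hfin, ← ENNReal.ofReal_one,
          ← ENNReal.ofReal_sub _ zero_le_one]
    _ ≤ ENNReal.ofReal (r - 1) * (ENNReal.ofReal ((1 + a) ^ n) * μ K) := by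
        gcongr
        exact addHaar_cthickening_le μ hKc hK hK1 ha
    _ = ENNReal.ofReal ((1 + b) ^ n - (1 + a) ^ n) * μ K := by
        rw [← mul_assoc, ← ENNReal.ofReal_mul (by linarith), sub_one_mul, hr_def, div_pow,
          div_mul_cancel₀ _ (by positivity)]

theorem addHaar_infDist_mem_Ioo_le (hKc : IsCompact K) (hK : Convex ℝ K)
    (hK1 : closedBall 0 1 ⊆ K) {a : ℝ} (ha : 0 ≤ a) (b : ℝ) :
    μ {y | infDist y K ∈ Ioo a b} ≤
      μ K * ∫⁻ t in Ioo a b, ENNReal.ofReal (finrank ℝ E * (1 + t) ^ (finrank ℝ E - 1)) := by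
  rcases le_total b a with hba | hab
  · simp [Ioo_eq_empty_of_le hba]
  have hKne : K.Nonempty := ⟨0, hK1 (mem_closedBall_self zero_le_one)⟩
  have hsub : {y | infDist y K ∈ Ioo a b} ⊆ cthickening b K \ cthickening a K :=
    fun y hy => ⟨(mem_cthickening_iff_infDist_le hKne (ha.trans hab)).2 hy.2.le,
      fun h => (mem_cthickening_iff_infDist_le hKne ha).1 h |>.not_gt hy.1⟩
  rw [lintegral_Ioo_natCast_mul_one_add_pow _ ha hab, mul_comm]
  exact (measure_mono hsub).trans (addHaar_cthickening_diff_le μ hKc hK hK1 ha hab)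

theorem setLIntegral_compl_comp_infDist_le (hKc : IsCompact K) (hK : Convex ℝ K)
    (hK1 : closedBall 0 1 ⊆ K) {f : ℝ → ℝ} (hf0 : 0 ≤ f) (hf : Measurable f)
    (hlevel : ∀ s > 0, ∃ a b, {t | s < f t} = Ioo a b) :
    ∫⁻ y in Kᶜ, ENNReal.ofReal (f (infDist y K)) ∂μ ≤
      μ K * ∫⁻ t in Ioi 0, ENNReal.ofReal (finrank ℝ E * (1 + t) ^ (finrank ℝ E - 1)) *
        ENNReal.ofReal (f t) := by
  set g : ℝ → ENNReal := fun t => ENNReal.ofReal (finrank ℝ E * (1 + t) ^ (finrank ℝ E - 1))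
  have hg : Measurable g := by fun_prop
  have hδ : Measurable fun y => infDist y K := (continuous_infDist_pt K).measurable
  have hinterval : ∀ a b, (μ.restrict Kᶜ).map (infDist · K) (Ioo a b) ≤
      (μ K • (volume.restrict (Ioi 0)).withDensity g) (Ioo a b) := by
    intro a b
    have hpos : ∀ y ∉ K, 0 < infDist y K := fun y hy =>
      (hKc.isClosed.notMem_iff_infDist_pos ⟨0, hK1 (mem_closedBall_self zero_le_one)⟩).1 hy
    rw [Measure.map_apply hδ measurableSet_Ioo, Measure.restrict_apply (hδ measurableSet_Ioo),
      Measure.smul_apply, withDensity_apply _ measurableSet_Ioo,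
      Measure.restrict_restrict measurableSet_Ioo, Ioo_inter_Ioi, smul_eq_mul]
    refine (measure_mono fun y hy => ?_).trans (addHaar_infDist_mem_Ioo_le μ hKc hK hK1
      (le_max_right a 0) b)
    exact ⟨max_lt hy.1.1 (hpos y hy.2), hy.1.2⟩
  calc ∫⁻ y in Kᶜ, ENNReal.ofReal (f (infDist y K)) ∂μ
      = ∫⁻ t, ENNReal.ofReal (f t) ∂(μ.restrict Kᶜ).map (infDist · K) :=
        (lintegral_map hf.ennreal_ofReal hδ).symm
    _ ≤ ∫⁻ t, ENNReal.ofReal (f t) ∂(μ K • (volume.restrict (Ioi 0)).withDensity g) :=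
        lintegral_ofReal_le_of_measure_Ioo_le hf0 hf hlevel hinterval
    _ = _ := by
        rw [lintegral_smul_measure, lintegral_withDensity_eq_lintegral_mul _ hg hf.ennreal_ofReal,
          smul_eq_mul]
        rfl

end Thickening

theorem stmt_0_general (d : ℕ) (R η τ : ℝ) (hη : 0 < η)
    (K : Set (EuclideanSpace ℝ (Fin d))) (hKcl : IsClosed K)
    (hKconv : Convex ℝ K) (hK1 : closedBall (0 : EuclideanSpace ℝ (Fin d)) 1 ⊆ K)
    (hKR : K ⊆ closedBall (0 : EuclideanSpace ℝ (Fin d)) R) :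
    ∫ y, Real.exp (-(infDist y K - τ) ^ 2 / (2 * η)) ≤
      (volume K).toReal *
        (Real.exp (η * d ^ 2 / 2 + τ * d) * Real.sqrt (2 * Real.pi * η * d ^ 2) +
          Real.exp (-τ ^ 2 / (2 * η))) := by
  have hKc : IsCompact K := isCompact_of_isClosed_isBounded hKcl (isBounded_closedBall.subset hKR)
  set f : ℝ → ℝ := fun t => Real.exp (-(t - τ) ^ 2 / (2 * η))
  have hf0 : 0 ≤ f := fun t => (Real.exp_pos _).le
  have hf : Continuous f := by fun_prop
  have h_on : ∫⁻ y in K, ENNReal.ofReal (f (infDist y K)) =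
      volume K * ENNReal.ofReal (Real.exp (-τ ^ 2 / (2 * η))) := by
    rw [setLIntegral_congr_fun (g := fun _ => ENNReal.ofReal (f 0)) hKcl.measurableSet
        fun y hy => by rw [infDist_zero_of_mem hy],
      setLIntegral_const, mul_comm]
    simp [f]
  have h_off : ∫⁻ y in Kᶜ, ENNReal.ofReal (f (infDist y K)) ≤ volume K *
      ENNReal.ofReal (Real.exp (η * d ^ 2 / 2 + τ * d) * √(2 * Real.pi * η * d ^ 2)) := by
    have h := setLIntegral_compl_comp_infDist_le volume hKc hKconv hK1 hf0 hf.measurable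
      fun s hs => ⟨_, _, setOf_lt_exp_neg_sq_div hη τ hs⟩
    rw [finrank_euclideanSpace_fin] at h
    exact h.trans (by gcongr; exact setLIntegral_Ioi_natCast_mul_one_add_pow_mul_exp_le d hη τ)
  have hfδ : Continuous fun y => f (infDist y K) := hf.comp (continuous_infDist_pt K)
  rw [integral_eq_lintegral_of_nonneg_ae (ae_of_all _ fun y => hf0 (infDist y K))
    hfδ.aestronglyMeasurable]
  calc (∫⁻ y, ENNReal.ofReal (f (infDist y K))).toReal
      ≤ (volume K * ENNReal.ofReal (Real.exp (η * d ^ 2 / 2 + τ * d) *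
          √(2 * Real.pi * η * d ^ 2) + Real.exp (-τ ^ 2 / (2 * η)))).toReal := by
        refine ENNReal.toReal_mono
          (ENNReal.mul_ne_top hKc.measure_lt_top.ne ENNReal.ofReal_ne_top) ?_
        rw [← lintegral_add_compl _ hKcl.measurableSet, ENNReal.ofReal_add (by positivity)
          (by positivity), mul_add, add_comm (volume K * _)]
        exact add_le_add h_on.le h_off
    _ = _ := by rw [ENNReal.toReal_mul, ENNReal.toReal_ofReal (by positivity)]

theorem stmt_0 (d : ℕ) (hd : 1 ≤ d) (R η τ : ℝ) (hR : 1 < R) (hη : 0 < η) (hτ : 0 ≤ τ)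
    (K : Set (EuclideanSpace ℝ (Fin d))) (hKne : K.Nonempty) (hKcl : IsClosed K)
    (hKconv : Convex ℝ K) (hK1 : closedBall (0 : EuclideanSpace ℝ (Fin d)) 1 ⊆ K)
    (hKR : K ⊆ closedBall (0 : EuclideanSpace ℝ (Fin d)) R) :
    ∫ y, Real.exp (-(infDist y K - τ) ^ 2 / (2 * η)) ≤
      (volume K).toReal *
        (Real.exp (η * d ^ 2 / 2 + τ * d) * Real.sqrt (2 * Real.pi * η * d ^ 2) +
          Real.exp (-τ ^ 2 / (2 * η))) :=
  stmt_0_general d R η τ hη K hKcl hKconv hK1 hKR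
end

section
/- Let d ≥ 1, η > 0, c ∈ ℝ^d and b ∈ ℝ. Then ∫_{ℝ^d} exp(−(‖x − c‖ − b)²/(2η)) dx ≤ exp(1/4 + d·b²/η) · (2πη)^{d/2}. -/
/-!
By the Peter–Paul inequality `l a² - l/(1-l) b² ≤ (a - b)²` with `0 < l < 1`, the integrand
is dominated by `exp (l/(1-l) · b²/(2η))` times a Gaussian of variance `η / l` centred at `c`,
whose integral is `(2πη/l)^(d/2)`. The choice `l = 2d/(2d+1)` makes the first factor
`exp (d b²/η)` and the variance inflation `(1 + 1/(2d))^(d/2) ≤ exp (1/4)`.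
-/

open MeasureTheory Real Module

theorem mul_sq_sub_div_mul_sq_le_sq_sub {l : ℝ} (hl : l < 1) (a b : ℝ) :
    l * a ^ 2 - l / (1 - l) * b ^ 2 ≤ (a - b) ^ 2 := by
  have hl' : 0 < 1 - l := by linarith
  have hgap : (a - b) ^ 2 - (l * a ^ 2 - l / (1 - l) * b ^ 2) =
      (1 - l) * (a - b / (1 - l)) ^ 2 := by
    field_simp
    ring
  linarith [mul_nonneg hl'.le (sq_nonneg (a - b / (1 - l)))]

theorem one_add_rpow_le_exp_mul {t s : ℝ} (ht : -1 ≤ t) (hs : 0 ≤ s) :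
    (1 + t) ^ s ≤ exp (t * s) :=
  calc (1 + t) ^ s ≤ exp t ^ s :=
        rpow_le_rpow (by linarith) (by linarith [add_one_le_exp t]) hs
    _ = exp (t * s) := (exp_mul t s).symm

section InnerProductSpace

variable {V : Type*} [NormedAddCommGroup V] [InnerProductSpace ℝ V] [FiniteDimensional ℝ V]
  [MeasurableSpace V] [BorelSpace V]

theorem integral_rexp_neg_mul_sq_norm_sub {β : ℝ} (hβ : 0 < β) (c : V) :
    ∫ x : V, exp (-β * ‖x - c‖ ^ 2) = (π / β) ^ (finrank ℝ V / 2 : ℝ) := by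
  rw [integral_sub_right_eq_self (fun x ↦ exp (-β * ‖x‖ ^ 2)) c,
    GaussianFourier.integral_rexp_neg_mul_sq_norm hβ]

theorem integrable_rexp_neg_mul_sq_norm_sub {β : ℝ} (hβ : 0 < β) (c : V) :
    Integrable fun x : V ↦ exp (-β * ‖x - c‖ ^ 2) :=
  Integrable.of_integral_ne_zero (by rw [integral_rexp_neg_mul_sq_norm_sub hβ]; positivity)

theorem integral_exp_neg_sq_norm_sub_sub_le {η l : ℝ} (hη : 0 < η) (hl₀ : 0 < l)
    (hl₁ : l < 1) (b : ℝ) (c : V) :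
    ∫ x : V, exp (-(‖x - c‖ - b) ^ 2 / (2 * η)) ≤
      exp (l / (1 - l) * b ^ 2 / (2 * η)) * (2 * π * η / l) ^ (finrank ℝ V / 2 : ℝ) := by
  have hβ : 0 < l / (2 * η) := by positivity
  have hdom : ∀ x : V, exp (-(‖x - c‖ - b) ^ 2 / (2 * η)) ≤
      exp (l / (1 - l) * b ^ 2 / (2 * η)) * exp (-(l / (2 * η)) * ‖x - c‖ ^ 2) := by
    intro x
    rw [← exp_add, exp_le_exp,
      show l / (1 - l) * b ^ 2 / (2 * η) + -(l / (2 * η)) * ‖x - c‖ ^ 2 =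
        -(l * ‖x - c‖ ^ 2 - l / (1 - l) * b ^ 2) / (2 * η) by ring]
    exact div_le_div_of_nonneg_right (neg_le_neg (mul_sq_sub_div_mul_sq_le_sq_sub hl₁ _ b))
      (by positivity)
  calc ∫ x : V, exp (-(‖x - c‖ - b) ^ 2 / (2 * η))
      ≤ ∫ x : V,
          exp (l / (1 - l) * b ^ 2 / (2 * η)) * exp (-(l / (2 * η)) * ‖x - c‖ ^ 2) :=
        integral_mono_of_nonneg (.of_forall fun _ ↦ (exp_pos _).le)
          ((integrable_rexp_neg_mul_sq_norm_sub hβ c).const_mul _) (.of_forall hdom)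
    _ = exp (l / (1 - l) * b ^ 2 / (2 * η)) * (2 * π * η / l) ^ (finrank ℝ V / 2 : ℝ) := by
        rw [integral_const_mul, integral_rexp_neg_mul_sq_norm_sub hβ, div_div_eq_mul_div]
        ring_nf

end InnerProductSpace

theorem stmt_1 (d : ℕ) (hd : 1 ≤ d) (η b : ℝ) (hη : 0 < η) (c : EuclideanSpace ℝ (Fin d)) :
    ∫ x : EuclideanSpace ℝ (Fin d), Real.exp (-(‖x - c‖ - b) ^ 2 / (2 * η)) ≤
      Real.exp (1 / 4 + d * b ^ 2 / η) * (2 * Real.pi * η) ^ ((d : ℝ) / 2) := by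
  have hd' : (0 : ℝ) < d := by exact_mod_cast hd
  set l : ℝ := 2 * d / (2 * d + 1) with hl
  have hl₀ : 0 < l := by positivity
  have hl₁ : l < 1 := by rw [hl, div_lt_one (by positivity)]; linarith
  have hmean : l / (1 - l) * b ^ 2 / (2 * η) = d * b ^ 2 / η := by
    rw [hl]; field_simp; ring
  have hvar : 2 * π * η / l = 2 * π * η * (1 + 1 / (2 * d)) := by
    rw [hl]; field_simp
  have hinflation : (1 + 1 / (2 * d : ℝ)) ^ ((d : ℝ) / 2) ≤ exp (1 / 4) :=
    (one_add_rpow_le_exp_mul (neg_one_lt_zero.trans (by positivity)).le (by positivity)).trans_eq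
      (by congr 1; field_simp; ring)
  calc _ ≤ _ := integral_exp_neg_sq_norm_sub_sub_le hη hl₀ hl₁ b c
    _ = exp (d * b ^ 2 / η) *
          ((2 * π * η) ^ ((d : ℝ) / 2) * (1 + 1 / (2 * d)) ^ ((d : ℝ) / 2)) := by
        rw [finrank_euclideanSpace_fin, hmean, hvar, mul_rpow (by positivity) (by positivity)]
    _ ≤ exp (d * b ^ 2 / η) * ((2 * π * η) ^ ((d : ℝ) / 2) * exp (1 / 4)) := by gcongr
    _ = _ := by rw [exp_add]; ring
end

section
/- Let d ≥ 1, let K be a nonempty closed convex subset of ℝ^d with closedBall(0,1) ⊆ K ⊆ closedBall(0,R) for some R > 1, let η = 1/d², and let M > 0. Let π^Y be the probability measure on ℝ^d with Lebesgue density g(y) = (∫_K exp(−‖x−y‖²/(2η)) dx) / (vol(K)·(2πη)^{d/2}), and let μ be a measure on ℝ^d satisfying μ(A) ≤ M·π^Y(A) for every measurable set A. Define n(y) = (2πη)^{d/2}·exp(−infDist(y,K)²/(2η)) / ∫_K exp(−‖x−y‖²/(2η)) dx. Then ∫_{ℝ^d} n(y) dμ(y) ≤ M·(√(2πe) + 1).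 -/
/-!
Since `μ ≤ M • π^Y` and `g * n = exp (-infDist(·, K)² / (2η)) / vol K`, it suffices to show
`∫ exp (-infDist(y, K)² / (2η)) dy ≤ vol K * (1 + √(2πe))`. Writing
`exp (-s² / (2η)) = ∫_s^∞ (t / η) exp (-t² / (2η)) dt` and applying Tonelli, the left side
becomes `∫_0^∞ (t / η) exp (-t² / (2η)) vol {infDist(·, K) < t} dt`. As `K` is convex and
contains the unit ball, its `t`-thickening lies in `(1 + t) • K`, of volume at most
`exp (d t) vol K`. Completing the square in the remaining one-dimensional integral, with
`η = 1 / d²`, gives `1 + √(2πe)`.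
-/

open MeasureTheory Metric Set Real Filter Topology Pointwise
open scoped ENNReal

lemma hasDerivAt_neg_exp_neg_sq_div (η c t : ℝ) :
    HasDerivAt (fun t ↦ -exp (-(t - c) ^ 2 / (2 * η)))
      ((t - c) / η * exp (-(t - c) ^ 2 / (2 * η))) t := by
  have h : HasDerivAt (fun t ↦ -(t - c) ^ 2 / (2 * η)) (-(2 * (t - c)) / (2 * η)) t := by
    simpa using (((hasDerivAt_id' t).sub_const c).pow 2).neg.div_const (2 * η)
  exact h.exp.neg.congr_deriv (by ring)

section Gaussian

variable {η : ℝ}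

lemma integrable_exp_neg_sub_sq_div (hη : 0 < η) (c : ℝ) :
    Integrable fun t ↦ exp (-(t - c) ^ 2 / (2 * η)) := by
  convert (integrable_exp_neg_mul_sq (by positivity : 0 < 1 / (2 * η))).comp_sub_right c using 2
  ring_nf

lemma integrable_sub_div_mul_exp_neg_sq_div (hη : 0 < η) (c : ℝ) :
    Integrable fun t ↦ (t - c) / η * exp (-(t - c) ^ 2 / (2 * η)) := by
  convert ((integrable_mul_exp_neg_mul_sq (by positivity : 0 < 1 / (2 * η))).const_mul
    η⁻¹).comp_sub_right c using 2
  ring_nf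

lemma integral_exp_neg_sub_sq_div (hη : 0 < η) (c : ℝ) :
    ∫ t, exp (-(t - c) ^ 2 / (2 * η)) = √(2 * π * η) := by
  have h := integral_sub_right_eq_self (μ := volume) (fun t ↦ exp (-(1 / (2 * η)) * t ^ 2)) c
  rw [integral_gaussian, show π / (1 / (2 * η)) = 2 * π * η by field_simp] at h
  rw [← h]
  congr 1 with t
  ring_nf

lemma integral_Ioi_sub_div_mul_exp_neg_sq_div (hη : 0 < η) (c a : ℝ) :
    ∫ t in Ioi a, (t - c) / η * exp (-(t - c) ^ 2 / (2 * η)) =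
      exp (-(a - c) ^ 2 / (2 * η)) := by
  have hlim : Tendsto (fun t ↦ -exp (-(t - c) ^ 2 / (2 * η))) atTop (𝓝 0) := by
    have h : Tendsto (fun t ↦ (t - c) ^ 2 / (2 * η)) atTop atTop :=
      ((tendsto_pow_atTop two_ne_zero).comp
        (tendsto_atTop_add_const_right _ (-c) tendsto_id)).atTop_div_const (by positivity)
    simpa [neg_div] using (tendsto_exp_atBot.comp (tendsto_neg_atTop_atBot.comp h)).neg
  rw [integral_Ioi_of_hasDerivAt_of_tendsto (by fun_prop)
    (fun t _ ↦ hasDerivAt_neg_exp_neg_sq_div η c t)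
    (integrable_sub_div_mul_exp_neg_sq_div hη c).integrableOn hlim]
  ring

lemma ofReal_exp_neg_sq_div_eq_setLIntegral (hη : 0 < η) {a : ℝ} (ha : 0 ≤ a) :
    ENNReal.ofReal (exp (-a ^ 2 / (2 * η))) =
      ∫⁻ t in Ioi a, ENNReal.ofReal (t / η * exp (-t ^ 2 / (2 * η))) := by
  have h := integral_Ioi_sub_div_mul_exp_neg_sq_div hη 0 a
  simp only [sub_zero] at h
  rw [← h, ofReal_integral_eq_lintegral_ofReal]
  · exact (by simpa using integrable_sub_div_mul_exp_neg_sq_div hη 0 :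
      Integrable fun t ↦ t / η * exp (-t ^ 2 / (2 * η))).integrableOn
  · refine (ae_restrict_iff' measurableSet_Ioi).2 (.of_forall fun t (ht : a < t) ↦ ?_)
    have : 0 < t := ha.trans_lt ht
    dsimp
    positivity

lemma exp_mul_mul_exp_neg_sq_div_eq (hη : η ≠ 0) (a t : ℝ) :
    exp (a * t) * (t / η * exp (-t ^ 2 / (2 * η))) =
      exp (a ^ 2 * η / 2) * ((t - a * η) / η * exp (-(t - a * η) ^ 2 / (2 * η)) +
        a * exp (-(t - a * η) ^ 2 / (2 * η))) := by
  have hexp : exp (a * t) * exp (-t ^ 2 / (2 * η)) =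
      exp (a ^ 2 * η / 2) * exp (-(t - a * η) ^ 2 / (2 * η)) := by
    rw [← exp_add, ← exp_add]
    congr 1
    field_simp
    ring
  calc exp (a * t) * (t / η * exp (-t ^ 2 / (2 * η)))
      = t / η * (exp (a * t) * exp (-t ^ 2 / (2 * η))) := by ring
    _ = _ := by rw [hexp]; field_simp; ring

lemma setLIntegral_Ioi_exp_mul_mul_exp_neg_sq_le (hη : 0 < η) {a : ℝ} (ha : 0 ≤ a) :
    ∫⁻ t in Ioi 0, ENNReal.ofReal (exp (a * t) * (t / η * exp (-t ^ 2 / (2 * η)))) ≤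
      ENNReal.ofReal (1 + a * √(2 * π * η) * exp (a ^ 2 * η / 2)) := by
  simp_rw [exp_mul_mul_exp_neg_sq_div_eq hη.ne']
  set G : ℝ → ℝ := fun t ↦ exp (-(t - a * η) ^ 2 / (2 * η))
  have hG : Integrable G := integrable_exp_neg_sub_sq_div hη (a * η)
  have hG' := integrable_sub_div_mul_exp_neg_sq_div hη (a * η)
  have hG_Ioi : ∫ t in Ioi 0, G t ≤ √(2 * π * η) := by
    rw [← integral_exp_neg_sub_sq_div hη (a * η)]
    exact setIntegral_le_integral hG (.of_forall fun t ↦ (exp_pos _).le)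
  have hint : Integrable fun t ↦ exp (a ^ 2 * η / 2) * ((t - a * η) / η * G t + a * G t) :=
    (hG'.add (hG.const_mul a)).const_mul _
  rw [← ofReal_integral_eq_lintegral_ofReal hint.integrableOn
    ((ae_restrict_iff' measurableSet_Ioi).2 (.of_forall fun t ht ↦ ?_))]
  · refine ENNReal.ofReal_le_ofReal ?_
    rw [integral_const_mul, integral_add hG'.integrableOn (hG.const_mul a).integrableOn,
      integral_const_mul, integral_Ioi_sub_div_mul_exp_neg_sq_div hη, mul_add, ← exp_add,
      show a ^ 2 * η / 2 + -(0 - a * η) ^ 2 / (2 * η) = 0 by field_simp; ring, exp_zero]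
    calc 1 + exp (a ^ 2 * η / 2) * (a * ∫ t in Ioi 0, G t)
        = 1 + a * (∫ t in Ioi 0, G t) * exp (a ^ 2 * η / 2) := by ring
      _ ≤ 1 + a * √(2 * π * η) * exp (a ^ 2 * η / 2) := by gcongr
  · simp only [Pi.zero_apply, G, ← exp_mul_mul_exp_neg_sq_div_eq hη.ne']
    have : (0 : ℝ) < t := ht
    positivity

lemma one_add_mul_sqrt_mul_exp_eq_of_eq_inv_sq {d : ℝ} (hd : 0 < d) (hη : η = 1 / d ^ 2) :
    1 + d * √(2 * π * η) * exp (d ^ 2 * η / 2) = √(2 * π * exp 1) + 1 := by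
  have hdη : d ^ 2 * η = 1 := by rw [hη]; field_simp
  have hsqrt : d * √(2 * π * η) = √(2 * π) := by
    rw [← sqrt_sq hd.le, ← sqrt_mul (sq_nonneg _), mul_left_comm, hdη, mul_one]
  rw [hsqrt, hdη, sqrt_mul' (2 * π) (exp_pos 1).le, ← exp_half]
  ring

end Gaussian

lemma lintegral_setLIntegral_Ioi_eq {α : Type*} [MeasurableSpace α] (μ : Measure α) [SFinite μ]
    {φ : α → ℝ} (hφ : Measurable φ) {F : ℝ → ℝ≥0∞} (hF : Measurable F) :
    ∫⁻ y, (∫⁻ t in Ioi (φ y), F t) ∂μ = ∫⁻ t, μ {y | φ y < t} * F t := by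
  have hmeas : Measurable (Function.uncurry fun y t ↦ (Ioi (φ y)).indicator F t) :=
    (hF.comp measurable_snd).indicator
      (measurableSet_lt (hφ.comp measurable_fst) measurable_snd)
  calc ∫⁻ y, (∫⁻ t in Ioi (φ y), F t) ∂μ
      = ∫⁻ y, (∫⁻ t, (Ioi (φ y)).indicator F t) ∂μ := by
        simp_rw [lintegral_indicator measurableSet_Ioi]
    _ = ∫⁻ t, ∫⁻ y, (Ioi (φ y)).indicator F t ∂μ :=
        lintegral_lintegral_swap hmeas.aemeasurable
    _ = ∫⁻ t, μ {y | φ y < t} * F t := by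
        congr 1 with t
        rw [mul_comm, ← lintegral_indicator_const (measurableSet_lt hφ measurable_const)]
        rfl

lemma one_add_pow_le_exp_mul {t : ℝ} (ht : 0 ≤ t) (n : ℕ) : (1 + t) ^ n ≤ exp (n * t) := by
  rw [exp_nat_mul]
  exact pow_le_pow_left₀ (by linarith) (by linarith [add_one_le_exp t]) n

section Thickening

variable {E : Type*} [NormedAddCommGroup E] [NormedSpace ℝ E] [MeasurableSpace E] [BorelSpace E]
  [FiniteDimensional ℝ E] (μ : Measure E) [μ.IsAddHaarMeasure] {K : Set E}

lemma addHaar_thickening_le (hK : Convex ℝ K) (hball : ball (0 : E) 1 ⊆ K) {t : ℝ}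
    (ht : 0 ≤ t) :
    μ (thickening t K) ≤ ENNReal.ofReal ((1 + t) ^ Module.finrank ℝ E) * μ K := by
  have hsub : thickening t K ⊆ (1 + t) • K := by
    rw [← add_ball_zero, hK.add_smul zero_le_one ht, one_smul]
    gcongr
    rcases ht.eq_or_lt with rfl | ht
    · simp
    · rw [← smul_unitBall_of_pos ht]
      exact smul_set_mono hball
  calc μ (thickening t K) ≤ μ ((1 + t) • K) := measure_mono hsub
    _ = _ := by rw [Measure.addHaar_smul, abs_of_nonneg (by positivity)]

lemma lintegral_exp_neg_infDist_sq_le (hK : Convex ℝ K) (hball : ball (0 : E) 1 ⊆ K) {η : ℝ}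
    (hη : 0 < η) :
    ∫⁻ y, ENNReal.ofReal (exp (-infDist y K ^ 2 / (2 * η))) ∂μ ≤
      μ K * ENNReal.ofReal (1 + Module.finrank ℝ E * √(2 * π * η) *
        exp ((Module.finrank ℝ E : ℝ) ^ 2 * η / 2)) := by
  set d := Module.finrank ℝ E
  set F : ℝ → ℝ≥0∞ := fun t ↦ ENNReal.ofReal (t / η * exp (-t ^ 2 / (2 * η)))
  have hKne : K.Nonempty := ⟨0, hball (mem_ball_self one_pos)⟩
  have hF_supp : (fun t ↦ μ {y | infDist y K < t} * F t).support ⊆ Ioi 0 := by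
    refine Function.support_subset_iff'.2 fun t (ht : ¬ 0 < t) ↦ ?_
    have : t / η * exp (-t ^ 2 / (2 * η)) ≤ 0 :=
      mul_nonpos_of_nonpos_of_nonneg (div_nonpos_of_nonpos_of_nonneg (not_lt.1 ht) hη.le)
        (exp_pos _).le
    simp [F, ENNReal.ofReal_eq_zero.2 this]
  have hlevel : ∀ t ∈ Ioi (0 : ℝ), μ {y | infDist y K < t} * F t ≤
      μ K * ENNReal.ofReal (exp (d * t) * (t / η * exp (-t ^ 2 / (2 * η)))) := by
    intro t (ht : 0 < t)
    have hthick : {y | infDist y K < t} = thickening t K := by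
      ext y
      exact (mem_thickening_iff_infDist_lt hKne).symm
    calc μ {y | infDist y K < t} * F t ≤ ENNReal.ofReal (exp (d * t)) * μ K * F t := by
          rw [hthick]
          gcongr
          refine (addHaar_thickening_le μ hK hball ht.le).trans ?_
          gcongr
          exact one_add_pow_le_exp_mul ht.le d
      _ = _ := by rw [ENNReal.ofReal_mul (exp_pos _).le]; ring
  calc ∫⁻ y, ENNReal.ofReal (exp (-infDist y K ^ 2 / (2 * η))) ∂μ
      = ∫⁻ y, (∫⁻ t in Ioi (infDist y K), F t) ∂μ :=
        lintegral_congr fun y ↦ ofReal_exp_neg_sq_div_eq_setLIntegral hη infDist_nonneg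
    _ = ∫⁻ t, μ {y | infDist y K < t} * F t :=
        lintegral_setLIntegral_Ioi_eq μ (continuous_infDist_pt K).measurable (by fun_prop)
    _ = ∫⁻ t in Ioi 0, μ {y | infDist y K < t} * F t :=
        (setLIntegral_eq_of_support_subset hF_supp).symm
    _ ≤ ∫⁻ t in Ioi 0,
          μ K * ENNReal.ofReal (exp (d * t) * (t / η * exp (-t ^ 2 / (2 * η)))) :=
        setLIntegral_mono' measurableSet_Ioi hlevel
    _ ≤ _ := by
        rw [lintegral_const_mul _ (by fun_prop)]
        gcongr
        exact setLIntegral_Ioi_exp_mul_mul_exp_neg_sq_le hη d.cast_nonneg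

end Thickening

lemma setIntegral_exp_neg_norm_sub_sq_pos {E : Type*} [NormedAddCommGroup E] [MeasurableSpace E]
    [OpensMeasurableSpace E] (μ : Measure E) {K : Set E} (hK0 : μ K ≠ 0) (hKfin : μ K < ∞)
    {η : ℝ} (hη : 0 ≤ η) (y : E) :
    0 < ∫ x in K, exp (-‖x - y‖ ^ 2 / (2 * η)) ∂μ := by
  have : NeZero (μ.restrict K) := ⟨by simpa using hK0⟩
  refine integral_exp_pos (IntegrableOn.of_bound hKfin
    (by fun_prop : Continuous _).aestronglyMeasurable 1 (.of_forall fun x ↦ ?_))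
  rw [norm_of_nonneg (exp_pos _).le, exp_le_one_iff]
  exact div_nonpos_of_nonpos_of_nonneg (neg_nonpos.2 (sq_nonneg _)) (by positivity)

lemma measurable_setIntegral_exp_neg_norm_sub_sq {E : Type*} [NormedAddCommGroup E]
    [MeasurableSpace E] [BorelSpace E] [SecondCountableTopology E] (μ : Measure E) [SFinite μ]
    (K : Set E) (η : ℝ) :
    Measurable fun y ↦ ∫ x in K, exp (-‖x - y‖ ^ 2 / (2 * η)) ∂μ :=
  (StronglyMeasurable.integral_prod_right'
    (f := fun p : E × E ↦ exp (-‖p.2 - p.1‖ ^ 2 / (2 * η)))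
    (by fun_prop : Continuous _).stronglyMeasurable).measurable

lemma lintegral_le_mul_lintegral_of_le_withDensity {α : Type*} [MeasurableSpace α]
    {μ ν : Measure α} {ρ : α → ℝ≥0∞} (hρ : Measurable ρ) {c : ℝ≥0∞}
    (h : ∀ A, MeasurableSet A → μ A ≤ c * ν.withDensity ρ A) (f : α → ℝ≥0∞) :
    ∫⁻ x, f x ∂μ ≤ c * ∫⁻ x, ρ x * f x ∂ν :=
  calc ∫⁻ x, f x ∂μ ≤ ∫⁻ x, f x ∂(c • ν.withDensity ρ) :=
        lintegral_mono' (Measure.le_iff.2 h) le_rfl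
    _ = c * ∫⁻ x, f x ∂ν.withDensity ρ := lintegral_smul_measure _ _
    _ ≤ c * ∫⁻ x, ρ x * f x ∂ν := by
        gcongr c * ?_
        exact lintegral_withDensity_le_lintegral_mul ν hρ f

lemma ENNReal.ofReal_div_mul_ofReal_mul_div {a b p : ℝ} {V : ℝ≥0∞} (ha : 0 < a) (hp : 0 < p)
    (hV0 : V ≠ 0) (hV : V ≠ ∞) :
    ENNReal.ofReal (a / (V.toReal * p)) * ENNReal.ofReal (p * b / a) = ENNReal.ofReal b / V := by
  have hV_pos := ENNReal.toReal_pos hV0 hV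
  calc ENNReal.ofReal (a / (V.toReal * p)) * ENNReal.ofReal (p * b / a)
      = ENNReal.ofReal (b / V.toReal) := by
        rw [← ENNReal.ofReal_mul (by positivity)]
        congr 1
        field_simp
    _ = ENNReal.ofReal b / V := by rw [ENNReal.ofReal_div_of_pos hV_pos, ENNReal.ofReal_toReal hV]

lemma integral_le_of_lintegral_ofReal_le {α : Type*} [MeasurableSpace α] {μ : Measure α}
    {f : α → ℝ} (hf : 0 ≤ f) {C : ℝ} (hC : 0 ≤ C)
    (h : ∫⁻ x, ENNReal.ofReal (f x) ∂μ ≤ ENNReal.ofReal C) :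
    ∫ x, f x ∂μ ≤ C :=
  calc ∫ x, f x ∂μ ≤ ‖∫ x, f x ∂μ‖ := le_norm_self _
    _ ≤ (∫⁻ x, ENNReal.ofReal ‖f x‖ ∂μ).toReal := norm_integral_le_lintegral_norm f
    _ ≤ C := by
        simp_rw [norm_of_nonneg (hf _)]
        exact ENNReal.toReal_le_of_le_ofReal hC h

theorem stmt_4_general (d : ℕ) (hd : 1 ≤ d) (R M η : ℝ) (hM : 0 < M)
    (hη : η = 1 / (d : ℝ) ^ 2)
    (K : Set (EuclideanSpace ℝ (Fin d)))
    (hKconv : Convex ℝ K) (hK1 : closedBall (0 : EuclideanSpace ℝ (Fin d)) 1 ⊆ K)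
    (hKR : K ⊆ closedBall (0 : EuclideanSpace ℝ (Fin d)) R)
    (g : EuclideanSpace ℝ (Fin d) → ℝ)
    (hg : ∀ y, g y = (∫ x in K, Real.exp (-‖x - y‖ ^ 2 / (2 * η))) /
        ((volume K).toReal * (2 * Real.pi * η) ^ ((d : ℝ) / 2)))
    (πY : Measure (EuclideanSpace ℝ (Fin d)))
    (hπY : πY = volume.withDensity (fun y => ENNReal.ofReal (g y)))
    (μ : Measure (EuclideanSpace ℝ (Fin d)))
    (hμ : ∀ A : Set (EuclideanSpace ℝ (Fin d)), MeasurableSet A →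
        μ A ≤ ENNReal.ofReal M * πY A)
    (n : EuclideanSpace ℝ (Fin d) → ℝ)
    (hn : ∀ y, n y = (2 * Real.pi * η) ^ ((d : ℝ) / 2) *
        Real.exp (-(infDist y K) ^ 2 / (2 * η)) /
        ∫ x in K, Real.exp (-‖x - y‖ ^ 2 / (2 * η))) :
    ∫ y, n y ∂μ ≤ M * (Real.sqrt (2 * Real.pi * Real.exp 1) + 1) := by
  have hd0 : (0 : ℝ) < d := by exact_mod_cast hd
  have hη0 : 0 < η := by rw [hη]; positivity
  have hK0 : volume K ≠ 0 :=
    ((measure_closedBall_pos volume 0 one_pos).trans_le (measure_mono hK1)).ne'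
  have hKfin : volume K < ∞ := (isBounded_closedBall.subset hKR).measure_lt_top
  have hI := setIntegral_exp_neg_norm_sub_sq_pos volume hK0 hKfin hη0.le
  have hg_meas : Measurable g := by
    rw [funext hg]
    exact (measurable_setIntegral_exp_neg_norm_sub_sq volume K η).div_const _
  have hgn : ∀ y, ENNReal.ofReal (g y) * ENNReal.ofReal (n y) =
      ENNReal.ofReal (exp (-infDist y K ^ 2 / (2 * η))) / volume K := fun y ↦ by
    rw [hg, hn]
    exact ENNReal.ofReal_div_mul_ofReal_mul_div (hI y) (by positivity) hK0 hKfin.ne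
  have hgauss :=
    lintegral_exp_neg_infDist_sq_le volume hKconv (ball_subset_closedBall.trans hK1) hη0
  rw [finrank_euclideanSpace_fin, one_add_mul_sqrt_mul_exp_eq_of_eq_inv_sq hd0 hη] at hgauss
  refine integral_le_of_lintegral_ofReal_le
    (fun y ↦ by rw [hn]; exact div_nonneg (by positivity) (hI y).le) (by positivity) ?_
  calc ∫⁻ y, ENNReal.ofReal (n y) ∂μ
      ≤ ENNReal.ofReal M * ∫⁻ y, ENNReal.ofReal (g y) * ENNReal.ofReal (n y) :=
        lintegral_le_mul_lintegral_of_le_withDensity hg_meas.ennreal_ofReal (hπY ▸ hμ) _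
    _ = ENNReal.ofReal M *
          ((∫⁻ y, ENNReal.ofReal (exp (-infDist y K ^ 2 / (2 * η)))) / volume K) := by
        simp_rw [hgn, div_eq_mul_inv]
        rw [lintegral_mul_const' _ _ (ENNReal.inv_ne_top.2 hK0)]
    _ ≤ ENNReal.ofReal M * ENNReal.ofReal (√(2 * π * exp 1) + 1) := by
        gcongr
        exact ENNReal.div_le_of_le_mul' hgauss
    _ = ENNReal.ofReal (M * (√(2 * π * exp 1) + 1)) := (ENNReal.ofReal_mul hM.le).symm

theorem stmt_4 (d : ℕ) (hd : 1 ≤ d) (R M η : ℝ) (hR : 1 < R) (hM : 0 < M)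
    (hη : η = 1 / (d : ℝ) ^ 2)
    (K : Set (EuclideanSpace ℝ (Fin d))) (hKne : K.Nonempty) (hKcl : IsClosed K)
    (hKconv : Convex ℝ K) (hK1 : closedBall (0 : EuclideanSpace ℝ (Fin d)) 1 ⊆ K)
    (hKR : K ⊆ closedBall (0 : EuclideanSpace ℝ (Fin d)) R)
    (g : EuclideanSpace ℝ (Fin d) → ℝ)
    (hg : ∀ y, g y = (∫ x in K, Real.exp (-‖x - y‖ ^ 2 / (2 * η))) /
        ((volume K).toReal * (2 * Real.pi * η) ^ ((d : ℝ) / 2)))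
    (πY : Measure (EuclideanSpace ℝ (Fin d)))
    (hπY : πY = volume.withDensity (fun y => ENNReal.ofReal (g y)))
    (μ : Measure (EuclideanSpace ℝ (Fin d)))
    (hμ : ∀ A : Set (EuclideanSpace ℝ (Fin d)), MeasurableSet A →
        μ A ≤ ENNReal.ofReal M * πY A)
    (n : EuclideanSpace ℝ (Fin d) → ℝ)
    (hn : ∀ y, n y = (2 * Real.pi * η) ^ ((d : ℝ) / 2) *
        Real.exp (-(infDist y K) ^ 2 / (2 * η)) /
        ∫ x in K, Real.exp (-‖x - y‖ ^ 2 / (2 * η))) :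
    ∫ y, n y ∂μ ≤ M * (Real.sqrt (2 * Real.pi * Real.exp 1) + 1) :=
  stmt_4_general d hd R M η hM hη K hKconv hK1 hKR g hg πY hπY μ hμ n hn
end

section
/- Let d ≥ 1, η > 0, let K be a nonempty closed convex subset of ℝ^d, let y ∈ ℝ^d, let p be the metric projection of y onto K (p ∈ K and ‖y − p‖ ≤ ‖y − x‖ for all x ∈ K), and let x̂ ∈ K satisfy ‖x̂ − y‖²/(2η) ≤ ‖p − y‖²/(2η) + 1/d. Define P1(x) = (1/(2η))·(‖x − p‖² + ‖p − y‖²) and P2(x) = (1/(2η))·(‖x − x̂‖² + ‖x̂ − y‖² − 2·√(2η/d)·(‖x − x̂‖ + ‖x̂ − y‖) − 12η/d). Then P1(x) ≥ P2(x) for every x ∈ ℝ^d. -/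
/-!
Since `p` is the projection of `y` onto the convex set `K`, the variational inequality
`⟪y - p, x̂ - p⟫ ≤ 0` gives `‖x̂ - p‖² + ‖y - p‖² ≤ ‖y - x̂‖²`, so the near-optimality of `x̂`
forces `‖x̂ - p‖ ≤ s := √(2η/d)`. Then `‖x - x̂‖` and `‖x - p‖` differ by at most `s`, and
`‖x̂ - y‖² ≤ ‖p - y‖² + s²`; the claim is the resulting inequality between these four numbers.
-/

theorem sq_add_sq_sub_le_of_abs_sub_le {a b A B s : ℝ} (ha : 0 ≤ a) (hb : 0 ≤ b) (hB : 0 ≤ B)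
    (hs : 0 ≤ s) (hab : |b - a| ≤ s) (hBA : B ^ 2 ≤ A ^ 2 + s ^ 2) :
    b ^ 2 + B ^ 2 - 2 * s * (b + B) - 6 * s ^ 2 ≤ a ^ 2 + A ^ 2 := by
  obtain ⟨hab₁, hab₂⟩ := abs_le.1 hab
  -- `b² - a² = (b - a)(b + a) ≤ s(a + b) ≤ s(2b + s)` and `B² - A² ≤ s²`
  nlinarith [mul_nonneg hs hB, mul_nonneg (by linarith : 0 ≤ s - (b - a)) (by linarith : 0 ≤ a + b),
    mul_nonneg hs (by linarith : 0 ≤ b + s - a)]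

open scoped InnerProductSpace

section Projection

variable {E : Type*} [NormedAddCommGroup E] [InnerProductSpace ℝ E] {K : Set E} {y p : E}

theorem real_inner_sub_nonpos_of_forall_norm_sub_le (hK : Convex ℝ K) (hp : p ∈ K)
    (hproj : ∀ x ∈ K, ‖y - p‖ ≤ ‖y - x‖) {x : E} (hx : x ∈ K) : ⟪y - p, x - p⟫_ℝ ≤ 0 := by
  have : Nonempty K := ⟨⟨p, hp⟩⟩
  have hinf : ‖y - p‖ = ⨅ w : K, ‖y - w‖ :=
    le_antisymm (le_ciInf fun w => hproj w w.2)
      (ciInf_le ⟨0, Set.forall_mem_range.2 fun _ => norm_nonneg _⟩ (⟨p, hp⟩ : K))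
  exact (norm_eq_iInf_iff_real_inner_le_zero hK hp).1 hinf x hx

theorem norm_sub_sq_add_norm_sub_sq_le_of_forall_norm_sub_le (hK : Convex ℝ K) (hp : p ∈ K)
    (hproj : ∀ x ∈ K, ‖y - p‖ ≤ ‖y - x‖) {x : E} (hx : x ∈ K) :
    ‖x - p‖ ^ 2 + ‖y - p‖ ^ 2 ≤ ‖y - x‖ ^ 2 := by
  have hexp : ‖y - x‖ ^ 2 = ‖y - p‖ ^ 2 - 2 * ⟪y - p, x - p⟫_ℝ + ‖x - p‖ ^ 2 := by
    rw [← norm_sub_sq_real, sub_sub_sub_cancel_right]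
  linarith [real_inner_sub_nonpos_of_forall_norm_sub_le hK hp hproj hx]

theorem norm_sub_sq_add_sq_sub_le_of_approx_projection (hK : Convex ℝ K) {xhat : E} (hp : p ∈ K)
    (hproj : ∀ x ∈ K, ‖y - p‖ ≤ ‖y - x‖) (hxhat : xhat ∈ K) {s : ℝ} (hs : 0 ≤ s)
    (happrox : ‖xhat - y‖ ^ 2 ≤ ‖p - y‖ ^ 2 + s ^ 2) (x : E) :
    ‖x - xhat‖ ^ 2 + ‖xhat - y‖ ^ 2 - 2 * s * (‖x - xhat‖ + ‖xhat - y‖) - 6 * s ^ 2 ≤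
      ‖x - p‖ ^ 2 + ‖p - y‖ ^ 2 := by
  have hdist : ‖xhat - p‖ ≤ s := by
    have := norm_sub_sq_add_norm_sub_sq_le_of_forall_norm_sub_le hK hp hproj hxhat
    rw [norm_sub_rev y xhat, norm_sub_rev y p] at this
    exact (pow_le_pow_iff_left₀ (norm_nonneg _) hs two_ne_zero).1 (by linarith)
  have hnear : |‖x - xhat‖ - ‖x - p‖| ≤ s := by
    calc |‖x - xhat‖ - ‖x - p‖| ≤ ‖(x - xhat) - (x - p)‖ := abs_norm_sub_norm_le _ _
      _ = ‖xhat - p‖ := by rw [sub_sub_sub_cancel_left, norm_sub_rev]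
      _ ≤ s := hdist
  exact sq_add_sq_sub_le_of_abs_sub_le (norm_nonneg _) (norm_nonneg _) (norm_nonneg _) hs hnear
    happrox

end Projection

theorem stmt_7_general (d : ℕ) (η : ℝ) (hη : 0 < η)
    (K : Set (EuclideanSpace ℝ (Fin d)))
    (hKconv : Convex ℝ K) (y p xhat : EuclideanSpace ℝ (Fin d))
    (hpK : p ∈ K) (hproj : ∀ x ∈ K, ‖y - p‖ ≤ ‖y - x‖) (hxhatK : xhat ∈ K)
    (hxhat : ‖xhat - y‖ ^ 2 / (2 * η) ≤ ‖p - y‖ ^ 2 / (2 * η) + 1 / d) :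
    ∀ x : EuclideanSpace ℝ (Fin d),
      (1 / (2 * η)) * (‖x - p‖ ^ 2 + ‖p - y‖ ^ 2) ≥
        (1 / (2 * η)) * (‖x - xhat‖ ^ 2 + ‖xhat - y‖ ^ 2 -
          2 * Real.sqrt (2 * η / d) * (‖x - xhat‖ + ‖xhat - y‖) - 12 * η / d) := by
  intro x
  set s := Real.sqrt (2 * η / d)
  have hs2 : s ^ 2 = 2 * η / d := Real.sq_sqrt (by positivity)
  have happrox : ‖xhat - y‖ ^ 2 ≤ ‖p - y‖ ^ 2 + s ^ 2 := by
    have h2η : 0 < 2 * η := by positivity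
    calc ‖xhat - y‖ ^ 2 = ‖xhat - y‖ ^ 2 / (2 * η) * (2 * η) := (div_mul_cancel₀ _ h2η.ne').symm
      _ ≤ (‖p - y‖ ^ 2 / (2 * η) + 1 / d) * (2 * η) := by gcongr
      _ = ‖p - y‖ ^ 2 + s ^ 2 := by
        rw [add_mul, div_mul_cancel₀ _ h2η.ne', one_div_mul_eq_div, hs2]
  have h12 : 12 * η / d = 6 * s ^ 2 := by rw [hs2]; ring
  rw [h12]
  exact mul_le_mul_of_nonneg_left
    (norm_sub_sq_add_sq_sub_le_of_approx_projection hKconv hpK hproj hxhatK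
      (Real.sqrt_nonneg _) happrox x) (by positivity)

theorem stmt_7 (d : ℕ) (hd : 1 ≤ d) (η : ℝ) (hη : 0 < η)
    (K : Set (EuclideanSpace ℝ (Fin d))) (hKne : K.Nonempty) (hKcl : IsClosed K)
    (hKconv : Convex ℝ K) (y p xhat : EuclideanSpace ℝ (Fin d))
    (hpK : p ∈ K) (hproj : ∀ x ∈ K, ‖y - p‖ ≤ ‖y - x‖) (hxhatK : xhat ∈ K)
    (hxhat : ‖xhat - y‖ ^ 2 / (2 * η) ≤ ‖p - y‖ ^ 2 / (2 * η) + 1 / d) :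
    ∀ x : EuclideanSpace ℝ (Fin d),
      (1 / (2 * η)) * (‖x - p‖ ^ 2 + ‖p - y‖ ^ 2) ≥
        (1 / (2 * η)) * (‖x - xhat‖ ^ 2 + ‖xhat - y‖ ^ 2 -
          2 * Real.sqrt (2 * η / d) * (‖x - xhat‖ + ‖xhat - y‖) - 12 * η / d) :=
  stmt_7_general d η hη K hKconv y p xhat hpK hproj hxhatK hxhat
end

section
/- Let d ≥ 1, η > 0, let K be a nonempty closed convex subset of ℝ^d, let y ∈ ℝ^d, let p be the metric projection of y onto K (p ∈ K and ‖y − p‖ ≤ ‖y − x‖ for all x ∈ K), and let x̂ ∈ K satisfy ‖x̂ − y‖²/(2η) ≤ ‖p − y‖²/(2η) + 1/d. Define P2(x) = (1/(2η))·(‖x − x̂‖² + ‖x̂ − y‖² − 2·√(2η/d)·(‖x − x̂‖ + ‖x̂ − y‖) − 12η/d) and P3(x) = (1/(2η))·((‖x − x̂‖ − √(2η/d))² + (‖y − p‖ − 2·√(2η/d))² − 32η/d). Then P2(x) ≥ P3(x) for every x ∈ ℝ^d. -/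
theorem stmt_8 (d : ℕ) (hd : 1 ≤ d) (η : ℝ) (hη : 0 < η)
    (K : Set (EuclideanSpace ℝ (Fin d))) (hKne : K.Nonempty) (hKcl : IsClosed K)
    (hKconv : Convex ℝ K) (y p xhat : EuclideanSpace ℝ (Fin d))
    (hpK : p ∈ K) (hproj : ∀ x ∈ K, ‖y - p‖ ≤ ‖y - x‖) (hxhatK : xhat ∈ K)
    (hxhat : ‖xhat - y‖ ^ 2 / (2 * η) ≤ ‖p - y‖ ^ 2 / (2 * η) + 1 / d) :
    ∀ x : EuclideanSpace ℝ (Fin d),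
      (1 / (2 * η)) * (‖x - xhat‖ ^ 2 + ‖xhat - y‖ ^ 2 -
          2 * Real.sqrt (2 * η / d) * (‖x - xhat‖ + ‖xhat - y‖) - 12 * η / d) ≥
        (1 / (2 * η)) * ((‖x - xhat‖ - Real.sqrt (2 * η / d)) ^ 2 +
          (‖y - p‖ - 2 * Real.sqrt (2 * η / d)) ^ 2 - 32 * η / d) := by
  intro x
  have hd0 : (0:ℝ) < d := by exact_mod_cast hd
  have h2η : (0:ℝ) < 2 * η := by linarith
  set s := Real.sqrt (2 * η / d) with hs
  have hs2 : s ^ 2 = 2 * η / d := Real.sq_sqrt (by positivity)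
  have hs0 : 0 ≤ s := Real.sqrt_nonneg _
  have hba : ‖y - p‖ ≤ ‖xhat - y‖ := by
    have h := hproj xhat hxhatK
    rwa [norm_sub_rev y xhat] at h
  have ha2 : ‖xhat - y‖ ^ 2 ≤ ‖y - p‖ ^ 2 + 2 * η / d := by
    rw [norm_sub_rev y p]
    have h := mul_le_mul_of_nonneg_left hxhat (le_of_lt h2η)
    rw [mul_add, mul_div_cancel₀ _ (ne_of_gt h2η), mul_div_cancel₀ _ (ne_of_gt h2η)] at h
    calc ‖xhat - y‖ ^ 2 ≤ ‖p - y‖ ^ 2 + 2 * η * (1 / d) := h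
      _ = ‖p - y‖ ^ 2 + 2 * η / d := by ring
  have hab : ‖xhat - y‖ ≤ ‖y - p‖ + s := by
    nlinarith [norm_nonneg (xhat - y), norm_nonneg (y - p), hs0]
  rw [ge_iff_le]
  apply mul_le_mul_of_nonneg_left _ (by positivity : (0:ℝ) ≤ 1 / (2 * η))
  have h32 : 32 * η / (d:ℝ) = 16 * s ^ 2 := by rw [hs2]; ring
  have h12 : 12 * η / (d:ℝ) = 6 * s ^ 2 := by rw [hs2]; ring
  rw [h32, h12]
  nlinarith [mul_nonneg hs0 (sub_nonneg.2 (hab.trans_eq (by ring) : ‖xhat - y‖ ≤ ‖y - p‖ + s)),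
    mul_nonneg (sub_nonneg.2 hba) (add_nonneg (norm_nonneg (xhat - y)) (norm_nonneg (y - p))),
    mul_nonneg hs0 (norm_nonneg (y - p)), sq_nonneg s]
end
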